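/- With F(g) = max{1 − d̃_𝓗(Id, g), 0} and d_𝓗(g,h) = sup_{f ∈ 𝓗} |F(gf) − F(hf)|, write ‖g‖_𝓗 = d_𝓗(g, Id). Then: (i) if d̃_𝓗(Id, g) < 1, then ‖g‖_𝓗 ≥ d̃_𝓗(Id, g) = max{|ln λ|, ‖t‖} for g(v) = λv + t; (ii) if d̃_𝓗(Id, g) ≥ 1, then ‖g‖_𝓗 = 1. -/
import Mathlib


/-- A homothetic transformation `v ↦ λ • v + t` of `ℝⁿ`, recorded by its scale
factor `λ > 0` and translation part `t`. -/
structure Homothety (n : ℕ) where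
  scale : ℝ
  trans : EuclideanSpace ℝ (Fin n)
  scale_pos : 0 < scale

namespace Homothety

variable {n : ℕ}

theorem ext' {a b : Homothety n} (h1 : a.scale = b.scale) (h2 : a.trans = b.trans) :
    a = b := by
  cases a; cases b; simp_all

/-- Composition of homotheties: `(λ, t) * (μ, s) = (λμ, λ • s + t)`. -/
noncomputable instance : Mul (Homothety n) :=
  ⟨fun a b => ⟨a.scale * b.scale, a.scale • b.trans + a.trans,
    mul_pos a.scale_pos b.scale_pos⟩⟩

/-- The identity homothety `(1, 0)`. -/
instance : One (Homothety n) := ⟨⟨1, 0, one_pos⟩⟩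

/-- The inverse homothety `(λ, t)⁻¹ = (λ⁻¹, −λ⁻¹ • t)`. -/
noncomputable instance : Inv (Homothety n) := ⟨fun a => ⟨a.scale⁻¹, -(a.scale⁻¹ • a.trans),
  inv_pos.mpr a.scale_pos⟩⟩

@[simp] theorem mul_scale (a b : Homothety n) : (a * b).scale = a.scale * b.scale := rfl
@[simp] theorem mul_trans (a b : Homothety n) :
    (a * b).trans = a.scale • b.trans + a.trans := rfl
@[simp] theorem one_scale : (1 : Homothety n).scale = 1 := rfl
@[simp] theorem one_trans : (1 : Homothety n).trans = 0 := rfl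
@[simp] theorem inv_scale (a : Homothety n) : a⁻¹.scale = a.scale⁻¹ := rfl
@[simp] theorem inv_trans (a : Homothety n) : a⁻¹.trans = -(a.scale⁻¹ • a.trans) := rfl

/-- The group `𝓗` of homothetic transformations of `ℝⁿ` under composition. -/
noncomputable instance : Group (Homothety n) where
  mul_assoc a b c := ext' (mul_assoc _ _ _) (by simp [mul_smul, smul_add, add_assoc])
  one_mul a := ext' (one_mul _) (by simp)
  mul_one a := ext' (mul_one _) (by simp)
  inv_mul_cancel a := ext' (inv_mul_cancel₀ a.scale_pos.ne')
    (by simp [smul_smul, inv_mul_cancel₀ a.scale_pos.ne'])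

/-- The standard action of a homothety on `ℝⁿ`: `g • v = λ • v + t`. -/
noncomputable def act (g : Homothety n) (v : EuclideanSpace ℝ (Fin n)) :
    EuclideanSpace ℝ (Fin n) :=
  g.scale • v + g.trans

/-- The distance `d̃_𝓗(g, h) = max {|ln(λ/μ)|, ‖t − s‖}` on `𝓗`. -/
noncomputable def tdist (g h : Homothety n) : ℝ :=
  max |Real.log (g.scale / h.scale)| ‖g.trans - h.trans‖

end Homothety

namespace Homothety

/-- The auxiliary function `F(g) = max {1 − d̃_𝓗(Id, g), 0}`. -/
noncomputable def auxF (g : Homothety n) : ℝ :=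
  max (1 - tdist 1 g) 0

/-- The distance `d_𝓗(g, h) = sup_{f ∈ 𝓗} |F(gf) − F(hf)|`. -/
noncomputable def rdist (g h : Homothety n) : ℝ :=
  sSup (Set.range fun f : Homothety n => |auxF (g * f) - auxF (h * f)|)

end Homothety


namespace Homothety

theorem tdist_nonneg' {n : ℕ} (g h : Homothety n) : 0 ≤ tdist g h :=
  le_max_of_le_left (abs_nonneg _)

theorem auxF_nonneg {n : ℕ} (g : Homothety n) : 0 ≤ auxF g := le_max_right _ _

theorem auxF_le_one {n : ℕ} (g : Homothety n) : auxF g ≤ 1 := by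
  unfold auxF
  have := tdist_nonneg' (1 : Homothety n) g
  apply max_le <;> linarith

theorem auxF_one {n : ℕ} : auxF (1 : Homothety n) = 1 := by
  unfold auxF tdist
  simp

theorem abs_auxF_sub_le {n : ℕ} (g h : Homothety n) : |auxF g - auxF h| ≤ 1 := by
  rw [abs_sub_le_iff]
  have := auxF_nonneg g; have := auxF_nonneg h
  have := auxF_le_one g; have := auxF_le_one h
  constructor <;> linarith

theorem tdist_one_eq {n : ℕ} (g : Homothety n) :
    tdist 1 g = max |Real.log g.scale| ‖g.trans‖ := by
  unfold tdist
  rw [one_scale, one_trans, one_div, Real.log_inv, abs_neg, zero_sub, norm_neg]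

theorem range_bddAbove {n : ℕ} (g h : Homothety n) :
    BddAbove (Set.range fun f : Homothety n => |auxF (g * f) - auxF (h * f)|) := by
  refine ⟨1, ?_⟩
  rintro x ⟨f, rfl⟩
  exact abs_auxF_sub_le _ _

end Homothety

open Homothety in
/-- With `‖g‖_𝓗 = d_𝓗(g, Id)`: (i) if `d̃_𝓗(Id, g) < 1` then
`‖g‖_𝓗 ≥ d̃_𝓗(Id, g) = max {|ln λ|, ‖t‖}` for `g(v) = λ v + t`; (ii) if
`d̃_𝓗(Id, g) ≥ 1` then `‖g‖_𝓗 = 1`. -/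
theorem homothety_rdist_norm_bounds {n : ℕ} (g : Homothety n) :
    (tdist 1 g < 1 →
      tdist 1 g ≤ rdist g 1 ∧ tdist 1 g = max |Real.log g.scale| ‖g.trans‖) ∧
    (1 ≤ tdist 1 g → rdist g 1 = 1) := by
  have hmem : |auxF (g * 1) - auxF ((1 : Homothety n) * 1)| ∈
      Set.range fun f : Homothety n => |auxF (g * f) - auxF ((1 : Homothety n) * f)| :=
    ⟨1, rfl⟩
  have hkey : |auxF g - 1| ≤ rdist g 1 := by
    have h := le_csSup (range_bddAbove g 1) hmem
    rw [mul_one, one_mul, auxF_one] at h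
    exact h
  constructor
  · intro hlt
    refine ⟨?_, tdist_one_eq g⟩
    have hF : auxF g = 1 - tdist 1 g := by
      unfold auxF
      rw [max_eq_left (by linarith)]
    have : |auxF g - 1| = tdist 1 g := by
      rw [hF]
      have := tdist_nonneg' (1 : Homothety n) g
      rw [abs_of_nonpos (by linarith)]
      ring
    linarith [hkey, this.symm.le]
  · intro hge
    have hF : auxF g = 0 := by
      unfold auxF
      rw [max_eq_right (by linarith)]
    have h1 : (1 : ℝ) ≤ rdist g 1 := by
      have := hkey
      rw [hF] at this
      simpa using this
    have h2 : rdist g 1 ≤ 1 := by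
      apply csSup_le (Set.range_nonempty _)
      rintro x ⟨f, rfl⟩
      exact abs_auxF_sub_le _ _
    linarith
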